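/- (Black–Scholes delta / minimal hedge.) Let σ > 0, t > 0, K > 0, r ∈ ℝ, and define F(t,s) = (1/√(2π)) ∫_{−∞}^{∞} max(s·exp(σ y √t + (r − σ²/2) t) − K, 0) · e^{−y²/2} dy and y(t,s) = (1/(σ√t)) · (log(K/s) − (r − σ²/2) t) for s > 0. Then the map s ↦ F(t,s) is differentiable on (0,∞) and its derivative is ∂F/∂s (t,s) = e^{r t} Φ(σ√t − y(t,s)) = e^{r t} Φ((log(s/K) + t(r + σ²/2))/(σ√t)). -/

import Mathlib

/-!
With `m = σ√t` and `μ = (r - σ²/2)t`, the payoff `s e^{my+μ} - K` is positive exactly for `y`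
above the threshold `c = ycrit`. Completing the square,
`e^{my+μ} e^{-y²/2} = e^{μ+m²/2} e^{-(m-y)²/2}`, so the integral is the Black–Scholes formula
`F = s e^{rt} Φ(m - c) - K Φ(-c)`. Differentiating in `s`, the two terms coming from `c'(s)`
cancel, because `s e^{rt} φ(m - c) = K φ(c)` (`φ` the Gaussian density) is again the completed
square evaluated at `y = c`.
-/

open MeasureTheory

noncomputable def stdNormalCDF (y : ℝ) : ℝ :=
  (Real.sqrt (2 * Real.pi))⁻¹ * ∫ z in Set.Iio y, Real.exp (-(z ^ 2) / 2)

noncomputable def F (σ r K t s : ℝ) : ℝ :=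
  (Real.sqrt (2 * Real.pi))⁻¹ *
    ∫ y : ℝ, max (s * Real.exp (σ * y * Real.sqrt t + (r - σ ^ 2 / 2) * t) - K) 0 *
      Real.exp (-(y ^ 2) / 2)

/-- The solution `y` of `s exp(σ y √t + (r − σ²/2)t) = K`. -/
noncomputable def ycrit (σ r K t s : ℝ) : ℝ :=
  (σ * Real.sqrt t)⁻¹ * (Real.log (K / s) - (r - σ ^ 2 / 2) * t)

open Real Set

lemma integrable_exp_neg_sq_div_two : Integrable fun z : ℝ => exp (-(z ^ 2) / 2) := by
  convert integrable_exp_neg_mul_sq (b := (1 / 2 : ℝ)) (by norm_num) using 3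
  ring

lemma hasDerivAt_stdNormalCDF (x : ℝ) :
    HasDerivAt stdNormalCDF ((√(2 * π))⁻¹ * exp (-(x ^ 2) / 2)) x := by
  have hcont : Continuous fun z : ℝ => exp (-(z ^ 2) / 2) := by fun_prop
  have hint := integrable_exp_neg_sq_div_two
  have hsplit : stdNormalCDF = fun y => (√(2 * π))⁻¹ *
      ((∫ z in Iic 0, exp (-(z ^ 2) / 2)) + ∫ z in (0 : ℝ)..y, exp (-(z ^ 2) / 2)) := by
    funext y
    rw [stdNormalCDF, setIntegral_congr_set Iio_ae_eq_Iic,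
      ← intervalIntegral.integral_Iic_sub_Iic hint.integrableOn hint.integrableOn]
    ring
  have hFTC : HasDerivAt (fun y => ∫ z in (0 : ℝ)..y, exp (-(z ^ 2) / 2)) (exp (-(x ^ 2) / 2)) x :=
    intervalIntegral.integral_hasDerivAt_right hint.intervalIntegrable
      hcont.stronglyMeasurable.stronglyMeasurableAtFilter hcont.continuousAt
  rw [hsplit]
  simpa using (hFTC.const_add _).const_mul (√(2 * π))⁻¹

lemma stdNormalCDF_sub_eq_integral_Ioi (m c : ℝ) :
    stdNormalCDF (m - c) = (√(2 * π))⁻¹ * ∫ y in Ioi c, exp (-((m - y) ^ 2) / 2) := by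
  have hpres : MeasurePreserving (fun y : ℝ => m - y) := Measure.measurePreserving_sub_left _ m
  rw [stdNormalCDF, ← hpres.setIntegral_preimage_emb (Homeomorph.subLeft m).measurableEmbedding]
  congr 2
  ext y
  simp

lemma exp_mul_add_mul_exp_neg_sq (m μ y : ℝ) :
    exp (m * y + μ) * exp (-(y ^ 2) / 2) = exp (μ + m ^ 2 / 2) * exp (-((m - y) ^ 2) / 2) := by
  rw [← exp_add, ← exp_add]
  ring_nf

lemma integral_max_mul_exp_sub (m μ s K c : ℝ) (hm : 0 < m) (hs : 0 < s)
    (hc : s * exp (m * c + μ) = K) :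
    (√(2 * π))⁻¹ * ∫ y, max (s * exp (m * y + μ) - K) 0 * exp (-(y ^ 2) / 2) =
      s * exp (μ + m ^ 2 / 2) * stdNormalCDF (m - c) - K * stdNormalCDF (-c) := by
  have payoff_nonneg_iff (y : ℝ) : 0 ≤ s * exp (m * y + μ) - K ↔ c ≤ y := by
    rw [← hc, sub_nonneg, mul_le_mul_iff_right₀ hs, exp_le_exp, add_le_add_iff_right,
      mul_le_mul_iff_right₀ hm]
  set g : ℝ → ℝ := fun y =>
    s * exp (μ + m ^ 2 / 2) * exp (-((m - y) ^ 2) / 2) - K * exp (-(y ^ 2) / 2)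
  have hintegrand : (fun y => max (s * exp (m * y + μ) - K) 0 * exp (-(y ^ 2) / 2)) =
      (Ici c).indicator g := by
    funext y
    by_cases hy : c ≤ y
    · rw [indicator_of_mem (mem_Ici.mpr hy), max_eq_left ((payoff_nonneg_iff y).mpr hy)]
      linear_combination s * exp_mul_add_mul_exp_neg_sq m μ y
    · rw [indicator_of_notMem (by simpa using hy),
        max_eq_right (not_le.mp (mt (payoff_nonneg_iff y).mp hy)).le, zero_mul]
  have hint₁ : Integrable fun y : ℝ => exp (-((m - y) ^ 2) / 2) := by
    convert integrable_exp_neg_sq_div_two.comp_sub_right m using 4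
    ring
  have hcdf : stdNormalCDF (-c) = (√(2 * π))⁻¹ * ∫ y in Ioi c, exp (-(y ^ 2) / 2) := by
    simpa using stdNormalCDF_sub_eq_integral_Ioi 0 c
  rw [hintegrand, integral_indicator measurableSet_Ici, ← setIntegral_congr_set Ioi_ae_eq_Ici,
    integral_sub (hint₁.integrableOn.const_mul _)
      (integrable_exp_neg_sq_div_two.integrableOn.const_mul _),
    integral_const_mul, integral_const_mul, stdNormalCDF_sub_eq_integral_Ioi, hcdf]
  ring

/-- `ycrit σ r K t s` is `threshold (σ * √t) ((r - σ ^ 2 / 2) * t) K s`. -/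
noncomputable def threshold (m μ K s : ℝ) : ℝ := m⁻¹ * (log (K / s) - μ)

noncomputable def blackScholesCall (m μ K s : ℝ) : ℝ :=
  s * exp (μ + m ^ 2 / 2) * stdNormalCDF (m - threshold m μ K s) -
    K * stdNormalCDF (-threshold m μ K s)

section Threshold

variable {m μ K s : ℝ}

lemma mul_exp_threshold (hm : m ≠ 0) (hK : 0 < K) (hs : 0 < s) :
    s * exp (m * threshold m μ K s + μ) = K := by
  rw [threshold, mul_inv_cancel_left₀ hm, sub_add_cancel, exp_log (div_pos hK hs)]
  field_simp

lemma hasDerivAt_threshold (hK : K ≠ 0) (hs : s ≠ 0) :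
    HasDerivAt (threshold m μ K) (-(m⁻¹ * s⁻¹)) s := by
  have hlog : HasDerivAt (fun x => m⁻¹ * (log K - log x - μ)) (-(m⁻¹ * s⁻¹)) s := by
    simpa using (((hasDerivAt_log hs).const_sub (log K)).sub_const μ).const_mul m⁻¹
  refine hlog.congr_of_eventuallyEq ?_
  filter_upwards [eventually_ne_nhds hs] with x hx
  rw [threshold, log_div hK hx]

lemma sub_threshold (hm : m ≠ 0) : m - threshold m μ K s = (log (s / K) + μ + m ^ 2) / m := by
  rw [threshold, ← inv_div, log_inv]
  field_simp
  ring

lemma mul_exp_neg_sq_sub_threshold (hm : m ≠ 0) (hK : 0 < K) (hs : 0 < s) :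
    s * exp (μ + m ^ 2 / 2) * exp (-((m - threshold m μ K s) ^ 2) / 2) =
      K * exp (-(threshold m μ K s ^ 2) / 2) := by
  linear_combination exp (-(threshold m μ K s ^ 2) / 2) * mul_exp_threshold (μ := μ) hm hK hs -
    s * exp_mul_add_mul_exp_neg_sq m μ (threshold m μ K s)

lemma hasDerivAt_blackScholesCall (hm : m ≠ 0) (hK : 0 < K) (hs : 0 < s) :
    HasDerivAt (blackScholesCall m μ K)
      (exp (μ + m ^ 2 / 2) * stdNormalCDF (m - threshold m μ K s)) s := by
  set c := threshold m μ K s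
  have hc := hasDerivAt_threshold (m := m) (μ := μ) hK.ne' hs.ne'
  have hcall := ((hasDerivAt_mul_const (exp (μ + m ^ 2 / 2))).mul
      ((hasDerivAt_stdNormalCDF (m - c)).comp s (hc.const_sub m))).sub
    (((hasDerivAt_stdNormalCDF (-c)).comp s hc.neg).const_mul K)
  refine hcall.congr_deriv ?_
  simp only [Function.comp_apply, neg_neg, neg_sq]
  linear_combination (√(2 * π))⁻¹ * m⁻¹ * s⁻¹ * mul_exp_neg_sq_sub_threshold (μ := μ) hm hK hs

end Threshold

lemma F_eq_blackScholesCall (σ r K t s : ℝ) (hm : 0 < σ * √t) (hK : 0 < K) (hs : 0 < s) :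
    F σ r K t s = blackScholesCall (σ * √t) ((r - σ ^ 2 / 2) * t) K s := by
  rw [F, blackScholesCall, ← integral_max_mul_exp_sub _ _ s K _ hm hs
    (mul_exp_threshold hm.ne' hK hs)]
  simp only [mul_right_comm σ _ (√t)]

/-- Black–Scholes delta / minimal hedge: `s ↦ F(t,s)` is differentiable on `(0,∞)` with
derivative `∂F/∂s(t,s) = e^{rt} Φ(σ√t − y(t,s)) = e^{rt} Φ((log(s/K) + t(r + σ²/2))/(σ√t))`. -/
theorem black_scholes_delta (σ t K r : ℝ) (hσ : 0 < σ) (ht : 0 < t) (hK : 0 < K) :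
    ∀ s : ℝ, 0 < s →
      HasDerivAt (fun s' => F σ r K t s')
        (Real.exp (r * t) * stdNormalCDF (σ * Real.sqrt t - ycrit σ r K t s)) s ∧
      Real.exp (r * t) * stdNormalCDF (σ * Real.sqrt t - ycrit σ r K t s) =
        Real.exp (r * t) *
          stdNormalCDF ((Real.log (s / K) + t * (r + σ ^ 2 / 2)) / (σ * Real.sqrt t)) := by
  intro s hs
  have hm : 0 < σ * √t := mul_pos hσ (sqrt_pos.mpr ht)
  have hsq : √t ^ 2 = t := sq_sqrt ht.le
  have hdrift : (r - σ ^ 2 / 2) * t + (σ * √t) ^ 2 / 2 = r * t := by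
    linear_combination (σ ^ 2 / 2) * hsq
  have hF : (fun s' => F σ r K t s') =ᶠ[nhds s]
      blackScholesCall (σ * √t) ((r - σ ^ 2 / 2) * t) K := by
    filter_upwards [lt_mem_nhds hs] with x hx
    exact F_eq_blackScholesCall σ r K t x hm hK hx
  constructor
  · have hdelta := hasDerivAt_blackScholesCall (μ := (r - σ ^ 2 / 2) * t) hm.ne' hK hs
    rw [hdrift] at hdelta
    exact hdelta.congr_of_eventuallyEq hF
  · rw [ycrit, ← threshold, sub_threshold hm.ne']
    congr 3
    linear_combination σ ^ 2 * hsq
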